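/- For every real v > 1/2 and every tie-breaking rule, if (μ, ν) is a mixed Nash equilibrium of the AND–OR game then the expected utility of the OR player is strictly positive: U_or(μ, ν) > 0. -/

import Mathlib

open MeasureTheory Set
open scoped ENNReal

noncomputable section

/-- A bid profile for one player: a bid on each of the two items. -/
abbrev Bid := ℝ × ℝ

/-- The maximum allowed bid `H = max 1 v`. -/
def Hval (v : ℝ) : ℝ := max 1 v

/-- The set of allowed bids `[0,H] × [0,H]`. -/
def box (v : ℝ) : Set Bid := Icc (0:ℝ) (Hval v) ×ˢ Icc (0:ℝ) (Hval v)

/-- A tie-breaking rule: measurable functions `t₁ t₂ : ℝ → [0,1]`, where `tᵢ x` is the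
probability that AND wins item `i` when both players bid `x` on it. -/
structure TieRule where
  t1 : ℝ → ℝ
  t2 : ℝ → ℝ
  meas1 : Measurable t1
  meas2 : Measurable t2
  t1_nonneg : ∀ x, 0 ≤ t1 x
  t1_le_one : ∀ x, t1 x ≤ 1
  t2_nonneg : ∀ x, 0 ≤ t2 x
  t2_le_one : ∀ x, t2 x ≤ 1

/-- Probability that AND wins item 1 with bids `a` (AND) and `b` (OR). -/
def q1 (T : TieRule) (a b : Bid) : ℝ :=
  if b.1 < a.1 then 1 else if a.1 = b.1 then T.t1 a.1 else 0

/-- Probability that AND wins item 2 with bids `a` (AND) and `b` (OR). -/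
def q2 (T : TieRule) (a b : Bid) : ℝ :=
  if b.2 < a.2 then 1 else if a.2 = b.2 then T.t2 a.2 else 0

/-- Expected utility of the AND player at the pure profile `(a,b)`. -/
def uAnd (T : TieRule) (a b : Bid) : ℝ :=
  q1 T a b * q2 T a b - a.1 * q1 T a b - a.2 * q2 T a b

/-- Expected utility of the OR player at the pure profile `(a,b)`. -/
def uOr (v : ℝ) (T : TieRule) (a b : Bid) : ℝ :=
  v * (1 - q1 T a b * q2 T a b) - b.1 * (1 - q1 T a b) - b.2 * (1 - q2 T a b)

/-- A mixed strategy: a Borel probability measure on `ℝ × ℝ` supported in the box. -/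
def IsMixed (v : ℝ) (μ : Measure Bid) : Prop :=
  IsProbabilityMeasure μ ∧ μ (box v) = 1

/-- Expected utility of AND under mixed strategies. -/
def UAnd (T : TieRule) (μ ν : Measure Bid) : ℝ :=
  ∫ p, uAnd T p.1 p.2 ∂(μ.prod ν)

/-- Expected utility of OR under mixed strategies. -/
def UOr (v : ℝ) (T : TieRule) (μ ν : Measure Bid) : ℝ :=
  ∫ p, uOr v T p.1 p.2 ∂(μ.prod ν)

/-- `(μ,ν)` is a mixed Nash equilibrium of the AND–OR game. -/
def IsNash (v : ℝ) (T : TieRule) (μ ν : Measure Bid) : Prop :=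
  IsMixed v μ ∧ IsMixed v ν ∧
  (∀ a ∈ box v, (∫ b, uAnd T a b ∂ν) ≤ UAnd T μ ν) ∧
  (∀ b ∈ box v, (∫ a, uOr v T a b ∂μ) ≤ UOr v T μ ν)

/-- The uniform probability measure on `[0,1] ⊆ ℝ`. -/
def P01 : Measure ℝ := volume.restrict (Icc (0:ℝ) 1)

/-- The OR equilibrium strategy `ν*`: bid `(x,0)` or `(0,x)` with probability `1/2` each,
where `x ∈ [0,1/2]` has CDF `x/(1-x)`. -/
def nuStar : Measure Bid :=
  (1/2 : ℝ≥0∞) • Measure.map (fun u => (u/(1+u), (0:ℝ))) P01 +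
  (1/2 : ℝ≥0∞) • Measure.map (fun u => ((0:ℝ), u/(1+u))) P01

/-- Inverse-CDF map for the AND equilibrium bid distribution. -/
def gAnd (v u : ℝ) : ℝ := if 0 < u then max 0 (v - (v - 1/2)/u) else 0

/-- The AND equilibrium strategy `μ*`: bid `(y,y)` where `y ∈ [0,1/2]` has CDF
`(v-1/2)/(v-y)`, with an atom of mass `1 - 1/(2v)` at `0`. -/
def muStar (v : ℝ) : Measure Bid := Measure.map (fun u => (gAnd v u, gAnd v u)) P01

/-! OR secures a nonnegative payoff by bidding `(0,0)`, and so does AND. If OR's equilibrium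
payoff were `0`, then for every `c < v` AND would bid below `c` on an item with probability
`0`: otherwise the deviation of OR to `(c,0)` or `(0,c)` earns `v - c` times that probability.
So AND bids at least `v` on both items almost surely, and then pointwise
`uAnd + uOr ≤ 1/2 - v < 0`, contradicting that both equilibrium payoffs are nonnegative. -/

lemma abs_mul_le_abs_of_nonneg_of_le_one (x : ℝ) {q : ℝ} (h0 : 0 ≤ q) (h1 : q ≤ 1) :
    |x * q| ≤ |x| := by
  rw [abs_mul, abs_of_nonneg h0]
  exact mul_le_of_le_one_right (abs_nonneg x) h1

section Payoffs

variable (T : TieRule) (a b : Bid)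

lemma q1_nonneg : 0 ≤ q1 T a b := by
  unfold q1; split_ifs
  exacts [zero_le_one, T.t1_nonneg _, le_rfl]

lemma q1_le_one : q1 T a b ≤ 1 := by
  unfold q1; split_ifs
  exacts [le_rfl, T.t1_le_one _, zero_le_one]

lemma q2_nonneg : 0 ≤ q2 T a b := by
  unfold q2; split_ifs
  exacts [zero_le_one, T.t2_nonneg _, le_rfl]

lemma q2_le_one : q2 T a b ≤ 1 := by
  unfold q2; split_ifs
  exacts [le_rfl, T.t2_le_one _, zero_le_one]

variable {T a b}

lemma q1_eq_one_of_lt (h : b.1 < a.1) : q1 T a b = 1 := if_pos h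

lemma q2_eq_one_of_lt (h : b.2 < a.2) : q2 T a b = 1 := if_pos h

lemma q1_eq_zero_of_lt (h : a.1 < b.1) : q1 T a b = 0 := by
  rw [q1, if_neg h.not_gt, if_neg h.ne]

lemma q2_eq_zero_of_lt (h : a.2 < b.2) : q2 T a b = 0 := by
  rw [q2, if_neg h.not_gt, if_neg h.ne]

lemma mul_one_sub_q1_le {c : ℝ} (h : c ≤ a.1) : c * (1 - q1 T a b) ≤ b.1 * (1 - q1 T a b) := by
  rcases lt_or_ge b.1 a.1 with hlt | hge
  · simp [q1_eq_one_of_lt hlt]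
  · exact mul_le_mul_of_nonneg_right (h.trans hge) (sub_nonneg.2 (q1_le_one T a b))

lemma mul_one_sub_q2_le {c : ℝ} (h : c ≤ a.2) : c * (1 - q2 T a b) ≤ b.2 * (1 - q2 T a b) := by
  rcases lt_or_ge b.2 a.2 with hlt | hge
  · simp [q2_eq_one_of_lt hlt]
  · exact mul_le_mul_of_nonneg_right (h.trans hge) (sub_nonneg.2 (q2_le_one T a b))

lemma abs_uAnd_le : |uAnd T a b| ≤ 1 + |a.1| + |a.2| := by
  have hq := mul_le_one₀ (q1_le_one T a b) (q2_nonneg T a b) (q2_le_one T a b)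
  have hq₀ := mul_nonneg (q1_nonneg T a b) (q2_nonneg T a b)
  have h1 := abs_mul_le_abs_of_nonneg_of_le_one a.1 (q1_nonneg T a b) (q1_le_one T a b)
  have h2 := abs_mul_le_abs_of_nonneg_of_le_one a.2 (q2_nonneg T a b) (q2_le_one T a b)
  have := abs_sub (q1 T a b * q2 T a b - a.1 * q1 T a b) (a.2 * q2 T a b)
  have := abs_sub (q1 T a b * q2 T a b) (a.1 * q1 T a b)
  rw [abs_of_nonneg hq₀] at this
  unfold uAnd
  linarith

lemma abs_uOr_le (v : ℝ) : |uOr v T a b| ≤ |v| + |b.1| + |b.2| := by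
  have hq := mul_le_one₀ (q1_le_one T a b) (q2_nonneg T a b) (q2_le_one T a b)
  have hq₀ := mul_nonneg (q1_nonneg T a b) (q2_nonneg T a b)
  have h0 := abs_mul_le_abs_of_nonneg_of_le_one v (sub_nonneg.2 hq) (by linarith)
  have h1 := abs_mul_le_abs_of_nonneg_of_le_one b.1 (sub_nonneg.2 (q1_le_one T a b))
    (by linarith [q1_nonneg T a b])
  have h2 := abs_mul_le_abs_of_nonneg_of_le_one b.2 (sub_nonneg.2 (q2_le_one T a b))
    (by linarith [q2_nonneg T a b])
  have := abs_sub (v * (1 - q1 T a b * q2 T a b) - b.1 * (1 - q1 T a b)) (b.2 * (1 - q2 T a b))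
  have := abs_sub (v * (1 - q1 T a b * q2 T a b)) (b.1 * (1 - q1 T a b))
  unfold uOr
  linarith

lemma uAnd_zero_nonneg : 0 ≤ uAnd T (0, 0) b := by
  simpa [uAnd] using mul_nonneg (q1_nonneg T (0, 0) b) (q2_nonneg T (0, 0) b)

/-- Since `1 - q1 q2` dominates both `1 - q1` and `1 - q2`, OR never loses when its total bid is
at most `v`. -/
lemma uOr_nonneg {v : ℝ} (hb1 : 0 ≤ b.1) (hb2 : 0 ≤ b.2) (hb : b.1 + b.2 ≤ v) :
    0 ≤ uOr v T a b := by
  have hq := mul_le_one₀ (q1_le_one T a b) (q2_nonneg T a b) (q2_le_one T a b)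
  unfold uOr
  nlinarith [mul_nonneg hb1 (mul_nonneg (q1_nonneg T a b) (sub_nonneg.2 (q2_le_one T a b))),
    mul_nonneg hb2 (mul_nonneg (q2_nonneg T a b) (sub_nonneg.2 (q1_le_one T a b))),
    mul_nonneg (sub_nonneg.2 hb) (sub_nonneg.2 hq)]

lemma uOr_eq_of_fst_lt {v c : ℝ} (h : a.1 < c) : uOr v T a (c, 0) = v - c := by
  simp [uOr, q1_eq_zero_of_lt (b := (c, 0)) h]

lemma uOr_eq_of_snd_lt {v c : ℝ} (h : a.2 < c) : uOr v T a (0, c) = v - c := by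
  simp [uOr, q2_eq_zero_of_lt (b := (0, c)) h]

lemma uAnd_add_uOr_le {v : ℝ} (hv : 1 / 2 ≤ v) (h1 : v ≤ a.1) (h2 : v ≤ a.2) :
    uAnd T a b + uOr v T a b ≤ 1 / 2 - v := by
  have hb1 := mul_one_sub_q1_le (b := b) (T := T) h1
  have hb2 := mul_one_sub_q2_le (b := b) (T := T) h2
  have hq := mul_le_one₀ (q1_le_one T a b) (q2_nonneg T a b) (q2_le_one T a b)
  -- each player pays at least `v` per item won, so the sum is at most `q1 q2 (1 - v) - v`
  unfold uAnd uOr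
  nlinarith [mul_le_mul_of_nonneg_right h1 (q1_nonneg T a b),
    mul_le_mul_of_nonneg_right h2 (q2_nonneg T a b),
    mul_nonneg (mul_nonneg (q1_nonneg T a b) (q2_nonneg T a b)) (sub_nonneg.2 hv)]

end Payoffs

section Measurability

variable (T : TieRule)

lemma measurable_q1 : Measurable fun p : Bid × Bid => q1 T p.1 p.2 := by
  unfold q1
  exact Measurable.ite (measurableSet_lt (by fun_prop) (by fun_prop)) measurable_const
    (Measurable.ite (measurableSet_eq_fun (by fun_prop) (by fun_prop))
      (T.meas1.comp (by fun_prop)) measurable_const)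

lemma measurable_q2 : Measurable fun p : Bid × Bid => q2 T p.1 p.2 := by
  unfold q2
  exact Measurable.ite (measurableSet_lt (by fun_prop) (by fun_prop)) measurable_const
    (Measurable.ite (measurableSet_eq_fun (by fun_prop) (by fun_prop))
      (T.meas2.comp (by fun_prop)) measurable_const)

lemma measurable_uAnd : Measurable fun p : Bid × Bid => uAnd T p.1 p.2 := by
  have := measurable_q1 T; have := measurable_q2 T
  unfold uAnd; fun_prop

lemma measurable_uOr (v : ℝ) : Measurable fun p : Bid × Bid => uOr v T p.1 p.2 := by
  have := measurable_q1 T; have := measurable_q2 T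
  unfold uOr; fun_prop

end Measurability

lemma abs_le_Hval_of_mem_box {v : ℝ} {b : Bid} (hb : b ∈ box v) :
    |b.1| ≤ Hval v ∧ |b.2| ≤ Hval v :=
  ⟨abs_le.2 ⟨by linarith [hb.1.1, hb.1.2], hb.1.2⟩, abs_le.2 ⟨by linarith [hb.2.1, hb.2.2], hb.2.2⟩⟩

lemma zero_le_Hval (v : ℝ) : 0 ≤ Hval v := zero_le_one.trans (le_max_left _ _)

lemma mk_mem_box_of_le {v x y : ℝ} (hx0 : 0 ≤ x) (hx : x ≤ v) (hy0 : 0 ≤ y) (hy : y ≤ v) :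
    (x, y) ∈ box v :=
  ⟨⟨hx0, hx.trans (le_max_right _ _)⟩, ⟨hy0, hy.trans (le_max_right _ _)⟩⟩

lemma IsMixed.ae_mem_box {v : ℝ} {μ : Measure Bid} (hμ : IsMixed v μ) : ∀ᵐ a ∂μ, a ∈ box v := by
  have := hμ.1
  have hbox : MeasurableSet (box v) := measurableSet_Icc.prod measurableSet_Icc
  rw [ae_mem_iff_measure_eq hbox.nullMeasurableSet, hμ.2, measure_univ]

section Integrability

variable (T : TieRule) {v : ℝ} {μ ν : Measure Bid}

lemma integrable_uAnd_prod (hμ : IsMixed v μ) [IsFiniteMeasure ν] :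
    Integrable (fun p : Bid × Bid => uAnd T p.1 p.2) (μ.prod ν) := by
  have := hμ.1
  refine .of_bound (measurable_uAnd T).aestronglyMeasurable (1 + 2 * Hval v) ?_
  filter_upwards [Measure.quasiMeasurePreserving_fst.ae hμ.ae_mem_box] with p hp
  have := abs_le_Hval_of_mem_box hp
  linarith [abs_uAnd_le (T := T) (a := p.1) (b := p.2), Real.norm_eq_abs (uAnd T p.1 p.2)]

lemma integrable_uOr_prod [IsFiniteMeasure μ] (hν : IsMixed v ν) :
    Integrable (fun p : Bid × Bid => uOr v T p.1 p.2) (μ.prod ν) := by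
  have := hν.1
  refine .of_bound (measurable_uOr T v).aestronglyMeasurable (|v| + 2 * Hval v) ?_
  filter_upwards [Measure.quasiMeasurePreserving_snd.ae hν.ae_mem_box] with p hp
  have := abs_le_Hval_of_mem_box hp
  linarith [abs_uOr_le (T := T) (a := p.1) (b := p.2) v, Real.norm_eq_abs (uOr v T p.1 p.2)]

lemma integrable_uOr_left (v : ℝ) (b : Bid) [IsFiniteMeasure μ] :
    Integrable (fun a => uOr v T a b) μ :=
  .of_bound ((measurable_uOr T v).comp measurable_prodMk_right).aestronglyMeasurable
    (|v| + |b.1| + |b.2|) (.of_forall fun _ => abs_uOr_le v)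

end Integrability

lemma UAnd_add_UOr_le {v : ℝ} (T : TieRule) {μ ν : Measure Bid} (hμ : IsMixed v μ)
    (hν : IsMixed v ν) (hv : 1 / 2 ≤ v) (hbid : ∀ᵐ a ∂μ, v ≤ a.1 ∧ v ≤ a.2) :
    UAnd T μ ν + UOr v T μ ν ≤ 1 / 2 - v := by
  have := hμ.1; have := hν.1
  rw [UAnd, UOr, ← integral_add (integrable_uAnd_prod T hμ) (integrable_uOr_prod T hν)]
  refine (integral_mono_ae ((integrable_uAnd_prod T hμ).add (integrable_uOr_prod T hν))
    (integrable_const (1 / 2 - v)) ?_).trans_eq (by simp)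
  filter_upwards [Measure.quasiMeasurePreserving_fst.ae hbid] with p hp
  exact uAnd_add_uOr_le hv hp.1 hp.2

lemma ae_le_of_forall_measure_lt_eq_zero {α : Type*} [MeasurableSpace α] {μ : Measure α}
    {f : α → ℝ} {x : ℝ} (h : ∀ c < x, μ {a | f a < c} = 0) : ∀ᵐ a ∂μ, x ≤ f a := by
  have hq : ∀ᵐ a ∂μ, ∀ q : ℚ, (q : ℝ) < x → (q : ℝ) ≤ f a := by
    refine ae_all_iff.2 fun q => ?_
    by_cases hqx : (q : ℝ) < x
    · filter_upwards [measure_eq_zero_iff_ae_notMem.1 (h q hqx)] with a ha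
      exact fun _ => not_lt.1 ha
    · exact .of_forall fun _ h => absurd h hqx
  filter_upwards [hq] with a ha using le_of_forall_rat_lt_imp_le ha

namespace IsNash

variable {v : ℝ} {T : TieRule} {μ ν : Measure Bid}

lemma UAnd_nonneg (h : IsNash v T μ ν) : 0 ≤ UAnd T μ ν :=
  (integral_nonneg fun _ => uAnd_zero_nonneg).trans
    (h.2.2.1 _ ⟨⟨le_rfl, zero_le_Hval v⟩, ⟨le_rfl, zero_le_Hval v⟩⟩)

lemma UOr_nonneg (h : IsNash v T μ ν) (hv : 0 ≤ v) : 0 ≤ UOr v T μ ν :=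
  (integral_nonneg fun _ => uOr_nonneg le_rfl le_rfl (by simpa using hv)).trans
    (h.2.2.2 _ (mk_mem_box_of_le le_rfl hv le_rfl hv))

lemma measure_le_uOr_eq_zero (h : IsNash v T μ ν) (hU : UOr v T μ ν ≤ 0) {b : Bid}
    (hb : b ∈ box v) (hbv : b.1 + b.2 ≤ v) {ε : ℝ} (hε : 0 < ε) :
    μ {a | ε ≤ uOr v T a b} = 0 := by
  have := h.1.1
  have hmarkov := mul_meas_ge_le_integral_of_nonneg (μ := μ)
    (.of_forall fun a => uOr_nonneg (a := a) (T := T) hb.1.1 hb.2.1 hbv)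
    (integrable_uOr_left T v b) ε
  have hreal : μ.real {a | ε ≤ uOr v T a b} = 0 :=
    le_antisymm (nonpos_of_mul_nonpos_right ((hmarkov.trans (h.2.2.2 b hb)).trans hU) hε)
      measureReal_nonneg
  exact (measureReal_eq_zero_iff).1 hreal

lemma ae_le_fst (h : IsNash v T μ ν) (hv : 0 < v) (hU : UOr v T μ ν ≤ 0) :
    ∀ᵐ a ∂μ, v ≤ a.1 := by
  refine ae_le_of_forall_measure_lt_eq_zero fun c hc => ?_
  have hc' : max c 0 < v := max_lt hc hv
  refine measure_mono_null (fun a (ha : a.1 < c) => ?_) (h.measure_le_uOr_eq_zero hU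
    (mk_mem_box_of_le (le_max_right c 0) hc'.le le_rfl hv.le) (by simpa using hc'.le)
    (sub_pos.2 hc'))
  exact (uOr_eq_of_fst_lt (ha.trans_le (le_max_left c 0))).ge

lemma ae_le_snd (h : IsNash v T μ ν) (hv : 0 < v) (hU : UOr v T μ ν ≤ 0) :
    ∀ᵐ a ∂μ, v ≤ a.2 := by
  refine ae_le_of_forall_measure_lt_eq_zero fun c hc => ?_
  have hc' : max c 0 < v := max_lt hc hv
  refine measure_mono_null (fun a (ha : a.2 < c) => ?_) (h.measure_le_uOr_eq_zero hU
    (mk_mem_box_of_le le_rfl hv.le (le_max_right c 0) hc'.le) (by simpa using hc'.le)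
    (sub_pos.2 hc'))
  exact (uOr_eq_of_snd_lt (ha.trans_le (le_max_left c 0))).ge

end IsNash

/-- In any mixed Nash equilibrium `(μ,ν)` with `v > 1/2`, the expected
utility of the OR player is strictly positive. -/
theorem or_positive_utility (v : ℝ) (hv : 1/2 < v) (T : TieRule)
    (μ ν : Measure Bid) (h : IsNash v T μ ν) :
    0 < UOr v T μ ν := by
  have hv0 : 0 < v := by linarith
  by_contra! hU
  have hbid : ∀ᵐ a ∂μ, v ≤ a.1 ∧ v ≤ a.2 := (h.ae_le_fst hv0 hU).and (h.ae_le_snd hv0 hU)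
  have hsum := UAnd_add_UOr_le T h.1 h.2.1 hv.le hbid
  linarith [h.UAnd_nonneg, h.UOr_nonneg hv0.le]
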